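/- Let F, F', B, B' be nonempty compact subsets of L^p(I) (1 ≤ p ≤ ∞) with ‖f‖_p ≤ M_F for all f ∈ F, ‖f‖_p ≤ M_{F'} for all f ∈ F', ‖g‖_p ≤ M_B for all g ∈ B, and ‖g‖_p ≤ M_{B'} for all g ∈ B'. Define F *_T b = {f *_T b : f ∈ F}, f *_T B = {f *_T b : b ∈ B}, and F *_T B = {f *_T b : f ∈ F, b ∈ B}. Then for any f, b ∈ L^p(I) the Hausdorff distances satisfy: d_H(F, F*_T b) ≤ (Λ/(1−Λ))(M_F + ‖b‖_p); d_H(B, f*_T B) ≤ (1/(1−Λ))(M_B + ‖f‖_p); d_H(F, F*_T B) ≤ (Λ/(1−Λ))(M_F + M_B); d_H(B, F*_T B) ≤ (1/(1−Λ))(M_B + M_F); d_H(F*_T B, F'*_T B) ≤ (1/(1−Λ))(M_F + M_{F'}); d_H(F*_T B, F*_T B') ≤ (Λ/(1−Λ))(M_B + M_{B'}); and d_H(F*_T B, F'*_T B') ≤ (1/(1−Λ))((M_F + M_{F'}) + Λ(M_B + M_{B'})). -/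

import Mathlib

/-!
The fixed point `h = f *_T b` of `T_{f,b}` depends on `(f, b)` in a Lipschitz way.
The map `L_n⁻¹` sends `I_n` affinely onto `I`, pushing Lebesgue measure on `I_n` to
`|I_n|/|I|` times Lebesgue measure on `I`, and these weights sum to one; hence
`u ↦ (α_n ∘ L_n⁻¹)·(u ∘ L_n⁻¹)` (on each `I_n`) has `L^p` norm at most `Λ`, which gives
`‖h - h'‖ ≤ (‖f - f'‖ + Λ ‖b - b'‖) / (1 - Λ)`. Comparing with the trivial fixed points
`f = f *_T f` and `b = b *_T b` yields `‖f *_T b - f‖ ≤ Λ ‖f - b‖ / (1 - Λ)` and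
`‖f *_T b - b‖ ≤ ‖f - b‖ / (1 - Λ)`. The Hausdorff bounds follow by matching points,
using compactness to realise `d_H(F, F')` and `d_H(B, B')` by nearest points.
-/

open MeasureTheory ENNReal

noncomputable section

/-- The inverse of the increasing affine map `L n` sending `[x 0, x N]` onto
`[x n, x (n+1)]` (so `L n (x 0) = x n.castSucc` and `L n (x N) = x n.succ`). -/
def Linv {N : ℕ} (x : Fin (N + 1) → ℝ) (n : Fin N) (y : ℝ) : ℝ :=
  x 0 + (y - x n.castSucc) * (x (Fin.last N) - x 0) / (x n.succ - x n.castSucc)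

/-- The subinterval `I n` of the partition: `[x 0, x 1]` for `n = 0` and
`(x n, x (n+1)]` otherwise. -/
def subInt {N : ℕ} (x : Fin (N + 1) → ℝ) (n : Fin N) : Set ℝ :=
  if n.val = 0 then Set.Icc (x n.castSucc) (x n.succ)
  else Set.Ioc (x n.castSucc) (x n.succ)

/-- `h` is the image of `g` under the Read–Bajraktarević operator `T_{f,b}` with
scale functions `α`, almost everywhere: on each `I n`,
`h = f + (α n ∘ Lₙ⁻¹) · ((g - b) ∘ Lₙ⁻¹)`. -/
def RBEq {N : ℕ} (μ : Measure ℝ) (x : Fin (N + 1) → ℝ) (α : Fin N → ℝ → ℝ)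
    (f b g h : ℝ → ℝ) : Prop :=
  ∀ n : Fin N, ∀ᵐ t ∂μ, t ∈ subInt x n →
    h t = f t + α n (Linv x n t) * (g (Linv x n t) - b (Linv x n t))

/-- `h` satisfies the self-referential equation of `T_{f,b}`, i.e. `h` is a fixed
point of `T_{f,b}`; `h` is then the fractal convolution `f *_T b`. -/
def SelfRef {N : ℕ} (μ : Measure ℝ) (x : Fin (N + 1) → ℝ) (α : Fin N → ℝ → ℝ)
    (f b h : ℝ → ℝ) : Prop :=
  RBEq μ x α f b h h

open Set Metric Function
open scoped NNReal

theorem Fin.sum_univ_succ_sub_castSucc {M : Type*} [AddCommGroup M] :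
    ∀ {n : ℕ} (f : Fin (n + 1) → M),
      ∑ i : Fin n, (f i.succ - f i.castSucc) = f (Fin.last n) - f 0
  | 0, f => by simp
  | n + 1, f => by
    rw [Fin.sum_univ_castSucc]
    simp only [Fin.succ_castSucc]
    rw [Fin.sum_univ_succ_sub_castSucc (fun i => f i.castSucc)]
    simp

theorem Monotone.iUnion_Ioc_castSucc_succ {α : Type*} [LinearOrder α] :
    ∀ {n : ℕ} {x : Fin (n + 1) → α}, Monotone x →
      ⋃ i : Fin n, Ioc (x i.castSucc) (x i.succ) = Ioc (x 0) (x (Fin.last n))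
  | 0, x, _ => by simp
  | n + 1, x, hx => by
    rw [iUnion_fin_add_one_eq_iUnion_castSucc]
    simp only [Function.comp_def, Fin.succ_castSucc]
    exact (congrArg (· ∪ _)
      (hx.comp Fin.strictMono_castSucc.monotone).iUnion_Ioc_castSucc_succ).trans
      (Ioc_union_Ioc_eq_Ioc (hx (Fin.zero_le _)) (hx (Fin.castSucc_le_succ _)))

theorem Monotone.pairwise_disjoint_on_Ioc_castSucc_succ {α : Type*} [LinearOrder α] {n : ℕ}
    {x : Fin (n + 1) → α} (hx : Monotone x) :
    Pairwise (Disjoint on fun i : Fin n => Ioc (x i.castSucc) (x i.succ)) :=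
  (pairwise_disjoint_on _).2 fun _ _ hij =>
    Ioc_disjoint_Ioc_of_le (hx (Fin.succ_le_castSucc_iff.2 hij))

theorem MeasureTheory.Measure.restrict_Icc_eq_sum_restrict_Ioc {μ : Measure ℝ}
    [NullSingletonClass μ] {n : ℕ} {x : Fin (n + 1) → ℝ} (hx : Monotone x) :
    μ.restrict (Icc (x 0) (x (Fin.last n))) =
      Measure.sum fun i : Fin n => μ.restrict (Ioc (x i.castSucc) (x i.succ)) := by
  rw [← Measure.restrict_congr_set Ioc_ae_eq_Icc, ← hx.iUnion_Ioc_castSucc_succ]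
  exact Measure.restrict_iUnion hx.pairwise_disjoint_on_Ioc_castSucc_succ
    fun _ => measurableSet_Ioc

theorem Real.measurableEmbedding_affine {c : ℝ} (hc : c ≠ 0) (e : ℝ) :
    MeasurableEmbedding fun t : ℝ => c * t + e :=
  ((Homeomorph.mulLeft₀ c hc).trans (Homeomorph.addRight e)).measurableEmbedding

theorem Real.map_affine_volume_restrict_Ioc {c : ℝ} (hc : 0 < c) (e a b : ℝ) :
    Measure.map (fun t => c * t + e) (volume.restrict (Ioc a b)) =
      ENNReal.ofReal c⁻¹ • volume.restrict (Ioc (c * a + e) (c * b + e)) := by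
  have hmono : StrictMono fun t => c * t + e := fun s t hst => by dsimp; gcongr
  have hpre : (fun t => c * t + e) ⁻¹' Ioc (c * a + e) (c * b + e) = Ioc a b := by
    ext t; simp only [mem_preimage, mem_Ioc, hmono.lt_iff_lt, hmono.le_iff_le]
  have hmap : Measure.map (fun t => c * t + e) volume = ENNReal.ofReal c⁻¹ • volume := by
    rw [show (fun t => c * t + e) = (· + e) ∘ (c * ·) from rfl,
      ← Measure.map_map (by fun_prop) (by fun_prop), Real.map_volume_mul_left hc.ne',
      Measure.map_smul, map_add_right_eq_self, abs_of_pos (inv_pos.2 hc)]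
  rw [← hpre, ← Measure.restrict_map (by fun_prop) measurableSet_Ioc, hmap,
    Measure.restrict_smul]

theorem MeasureTheory.eLpNorm_sum_measure_le_of_le {α ι E F : Type*} [MeasurableSpace α]
    [Countable ι] [NormedAddCommGroup E] [NormedAddCommGroup F] {p : ℝ≥0∞}
    {ν ρ : ι → Measure α} {f : α → E} {g : α → F}
    (h : ∀ i, eLpNorm f p (ν i) ≤ eLpNorm g p (ρ i)) :
    eLpNorm f p (Measure.sum ν) ≤ eLpNorm g p (Measure.sum ρ) := by
  rcases eq_or_ne p 0 with rfl | hp0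
  · simp
  rcases eq_or_ne p ∞ with rfl | hptop
  · simp only [eLpNorm_exponent_top] at h ⊢
    refine essSup_le_of_ae_le _ (Measure.ae_sum_iff.2 fun i => ?_)
    filter_upwards [ae_le_eLpNormEssSup (f := f) (μ := ν i)] with t ht
    exact ht.trans ((h i).trans (eLpNormEssSup_mono_measure _
      (Measure.absolutelyContinuous_of_le (Measure.le_sum ρ i))))
  have hp : 0 < p.toReal := ENNReal.toReal_pos hp0 hptop
  simp only [eLpNorm_eq_lintegral_rpow_enorm_toReal hp0 hptop] at h ⊢
  refine ENNReal.rpow_le_rpow ?_ (by positivity)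
  rw [lintegral_sum_measure, lintegral_sum_measure]
  exact ENNReal.tsum_le_tsum fun i => (ENNReal.rpow_le_rpow_iff (by positivity)).1 (h i)

section Partition

variable {N : ℕ} {x : Fin (N + 1) → ℝ}

theorem StrictMono.succ_sub_castSucc_pos (hx : StrictMono x) (n : Fin N) :
    0 < x n.succ - x n.castSucc :=
  sub_pos.2 (hx n.castSucc_lt_succ)

theorem StrictMono.last_sub_zero_pos (hx : StrictMono x) (n : Fin N) :
    0 < x (Fin.last N) - x 0 :=
  sub_pos.2 (hx ((Fin.zero_le _).trans_lt (n.castSucc_lt_succ.trans_le (Fin.le_last _))))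

theorem Linv_eq_affine (x : Fin (N + 1) → ℝ) (n : Fin N) :
    Linv x n = fun t => (x (Fin.last N) - x 0) / (x n.succ - x n.castSucc) * t +
      (x 0 - (x (Fin.last N) - x 0) / (x n.succ - x n.castSucc) * x n.castSucc) := by
  funext t
  simp only [Linv]
  ring

theorem measurableEmbedding_Linv (hx : StrictMono x) (n : Fin N) :
    MeasurableEmbedding (Linv x n) := by
  rw [Linv_eq_affine]
  exact Real.measurableEmbedding_affine
    (div_pos (hx.last_sub_zero_pos n) (hx.succ_sub_castSucc_pos n)).ne' _

theorem map_Linv_restrict_Ioc (hx : StrictMono x) (n : Fin N) :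
    Measure.map (Linv x n) (volume.restrict (Ioc (x n.castSucc) (x n.succ))) =
      ENNReal.ofReal ((x n.succ - x n.castSucc) / (x (Fin.last N) - x 0)) •
        volume.restrict (Ioc (x 0) (x (Fin.last N))) := by
  have hd := (hx.succ_sub_castSucc_pos n).ne'
  rw [Linv_eq_affine, Real.map_affine_volume_restrict_Ioc
    (div_pos (hx.last_sub_zero_pos n) (hx.succ_sub_castSucc_pos n)), inv_div]
  congr 3 <;> field_simp <;> ring

theorem StrictMono.sum_ofReal_succ_sub_castSucc_div_eq_one (hx : StrictMono x) (hN : 0 < N) :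
    ∑ n : Fin N, ENNReal.ofReal ((x n.succ - x n.castSucc) / (x (Fin.last N) - x 0)) = 1 := by
  rw [← ENNReal.ofReal_sum_of_nonneg fun n _ =>
      (div_pos (hx.succ_sub_castSucc_pos n) (hx.last_sub_zero_pos n)).le,
    ← Finset.sum_div, Fin.sum_univ_succ_sub_castSucc,
    div_self (hx.last_sub_zero_pos ⟨0, hN⟩).ne', ENNReal.ofReal_one]

theorem Ioc_subset_subInt (n : Fin N) : Ioc (x n.castSucc) (x n.succ) ⊆ subInt x n := by
  unfold subInt
  split
  · exact Ioc_subset_Icc_self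
  · exact subset_rfl

end Partition

section Contraction

variable {N : ℕ} {x : Fin (N + 1) → ℝ} {p : ℝ≥0∞} {C : ℝ≥0} {u w : ℝ → ℝ}

theorem eLpNorm_restrict_Ioc_le_of_ae_eq_comp_Linv (hx : StrictMono x) (n : Fin N)
    {φ : ℝ → ℝ} (hφ : eLpNorm φ ∞ (volume.restrict (Icc (x 0) (x (Fin.last N)))) ≤ C)
    (hu : AEStronglyMeasurable u (volume.restrict (Icc (x 0) (x (Fin.last N)))))
    (hw : ∀ᵐ t ∂(volume.restrict (Icc (x 0) (x (Fin.last N)))), t ∈ subInt x n →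
      w t = φ (Linv x n t) * u (Linv x n t)) :
    eLpNorm w p (volume.restrict (Ioc (x n.castSucc) (x n.succ))) ≤
      eLpNorm ((C : ℝ) • u) p
        (ENNReal.ofReal ((x n.succ - x n.castSucc) / (x (Fin.last N) - x 0)) •
          volume.restrict (Icc (x 0) (x (Fin.last N)))) := by
  set μ := volume.restrict (Icc (x 0) (x (Fin.last N)))
  set ρ := ENNReal.ofReal ((x n.succ - x n.castSucc) / (x (Fin.last N) - x 0)) • μ
  have hwφu : w =ᵐ[volume.restrict (Ioc (x n.castSucc) (x n.succ))] (φ • u) ∘ Linv x n := by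
    rw [← Measure.restrict_restrict_of_subset (Ioc_subset_Icc_self.trans
      (Icc_subset_Icc (hx.monotone (Fin.zero_le _)) (hx.monotone (Fin.le_last _))))]
    filter_upwards [ae_restrict_of_ae hw, ae_restrict_mem measurableSet_Ioc] with t hwt ht
    exact hwt (Ioc_subset_subInt n ht)
  have hmap : Measure.map (Linv x n) (volume.restrict (Ioc (x n.castSucc) (x n.succ))) = ρ := by
    rw [map_Linv_restrict_Ioc hx n, Measure.restrict_congr_set Ioc_ae_eq_Icc]
  have hφρ : eLpNorm φ ∞ ρ ≤ C := by
    rw [eLpNorm_exponent_top] at hφ ⊢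
    exact (eLpNormEssSup_mono_measure _ Measure.smul_absolutelyContinuous).trans hφ
  calc eLpNorm w p (volume.restrict (Ioc (x n.castSucc) (x n.succ)))
      = eLpNorm (φ • u) p ρ := by
        rw [eLpNorm_congr_ae hwφu, ← hmap, (measurableEmbedding_Linv hx n).eLpNorm_map_measure]
    _ ≤ eLpNorm φ ∞ ρ * eLpNorm u p ρ :=
        eLpNorm_smul_le_eLpNorm_top_mul_eLpNorm p (hu.mono_ac Measure.smul_absolutelyContinuous) _
    _ ≤ C * eLpNorm u p ρ := by gcongr
    _ = eLpNorm ((C : ℝ) • u) p ρ := by rw [eLpNorm_const_smul, NNReal.enorm_eq]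

theorem eLpNorm_le_of_ae_eq_comp_Linv (hN : 0 < N) (hx : StrictMono x) {φ : Fin N → ℝ → ℝ}
    (hφ : ∀ n, eLpNorm (φ n) ∞ (volume.restrict (Icc (x 0) (x (Fin.last N)))) ≤ C)
    (hu : AEStronglyMeasurable u (volume.restrict (Icc (x 0) (x (Fin.last N)))))
    (hw : ∀ n, ∀ᵐ t ∂(volume.restrict (Icc (x 0) (x (Fin.last N)))), t ∈ subInt x n →
      w t = φ n (Linv x n t) * u (Linv x n t)) :
    eLpNorm w p (volume.restrict (Icc (x 0) (x (Fin.last N)))) ≤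
      C * eLpNorm u p (volume.restrict (Icc (x 0) (x (Fin.last N)))) := by
  set μ := volume.restrict (Icc (x 0) (x (Fin.last N)))
  have hμ_weights : μ = Measure.sum fun n : Fin N =>
      ENNReal.ofReal ((x n.succ - x n.castSucc) / (x (Fin.last N) - x 0)) • μ := by
    rw [Measure.sum_fintype, ← Finset.sum_smul,
      hx.sum_ofReal_succ_sub_castSucc_div_eq_one hN, one_smul]
  calc eLpNorm w p μ
      = eLpNorm w p
          (Measure.sum fun n : Fin N => volume.restrict (Ioc (x n.castSucc) (x n.succ))) := by
        rw [← Measure.restrict_Icc_eq_sum_restrict_Ioc hx.monotone]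
    _ ≤ eLpNorm ((C : ℝ) • u) p μ := by
        conv_rhs => rw [hμ_weights]
        exact eLpNorm_sum_measure_le_of_le fun n =>
          eLpNorm_restrict_Ioc_le_of_ae_eq_comp_Linv hx n (hφ n) hu (hw n)
    _ = C * eLpNorm u p μ := by rw [eLpNorm_const_smul, NNReal.enorm_eq]

end Contraction

theorem MeasureTheory.Lp.coeFn_sub_sub {α E : Type*} [MeasurableSpace α]
    [NormedAddCommGroup E] {p : ℝ≥0∞} {μ : Measure α} (f g f' g' : Lp E p μ) :
    ⇑((f - g) - (f' - g')) =ᵐ[μ] fun t => (f t - g t) - (f' t - g' t) := by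
  filter_upwards [Lp.coeFn_sub (f - g) (f' - g'), Lp.coeFn_sub f g, Lp.coeFn_sub f' g']
    with t h h₁ h₂
  rw [h, Pi.sub_apply, h₁, h₂, Pi.sub_apply, Pi.sub_apply]

theorem MeasureTheory.Lp.norm_le_mul_norm_of_eLpNorm_le {α E F : Type*} [MeasurableSpace α]
    [NormedAddCommGroup E] [NormedAddCommGroup F] {p : ℝ≥0∞} {μ : Measure α}
    {f : Lp E p μ} {g : Lp F p μ} {C : ℝ≥0} (h : eLpNorm f p μ ≤ C * eLpNorm g p μ) :
    ‖f‖ ≤ C * ‖g‖ := by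
  rw [Lp.norm_def, Lp.norm_def, ← ENNReal.coe_toReal, ← ENNReal.toReal_mul]
  exact ENNReal.toReal_mono (ENNReal.mul_ne_top ENNReal.coe_ne_top (Lp.eLpNorm_ne_top g)) h

theorem SelfRef.self {N : ℕ} (μ : Measure ℝ) (x : Fin (N + 1) → ℝ) (α : Fin N → ℝ → ℝ)
    (g : ℝ → ℝ) : SelfRef μ x α g g g :=
  fun _ => ae_of_all _ fun _ _ => by ring

section SelfRef

variable {N : ℕ} {x : Fin (N + 1) → ℝ} {p : ℝ≥0∞}
  {α : Fin N → Lp ℝ ∞ (volume.restrict (Icc (x 0) (x (Fin.last N))))} {Λ : ℝ}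
  {f b h f' b' h' : Lp ℝ p (volume.restrict (Icc (x 0) (x (Fin.last N))))}

theorem SelfRef.norm_sub_sub_le (hN : 0 < N) (hx : StrictMono x) (hΛ : ∀ n, ‖α n‖ ≤ Λ)
    (H : SelfRef (volume.restrict (Icc (x 0) (x (Fin.last N)))) x (fun n => α n) f b h)
    (H' : SelfRef (volume.restrict (Icc (x 0) (x (Fin.last N)))) x (fun n => α n) f' b' h') :
    ‖(h - h') - (f - f')‖ ≤ Λ * ‖(h - b) - (h' - b')‖ := by
  have hΛ₀ : 0 ≤ Λ := (norm_nonneg _).trans (hΛ ⟨0, hN⟩)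
  have hu := Lp.coeFn_sub_sub h b h' b'
  have hw := Lp.coeFn_sub_sub h h' f f'
  -- The identity is read at `Linv x n t`, so `u` must be the pointwise difference of the
  -- representatives of `h, b, h', b'`, not just a.e. equal to it.
  have key := eLpNorm_le_of_ae_eq_comp_Linv (p := p) hN hx (C := Λ.toNNReal)
    (w := fun t => (h t - h' t) - (f t - f' t))
    (fun n => (Lp.enorm_def (α n)).symm.trans_le <| by
      rw [← ofReal_norm]; exact ENNReal.ofReal_le_ofReal (hΛ n))
    ((Lp.aestronglyMeasurable _).congr hu)
    fun n => by filter_upwards [H n, H' n] with t e e' ht; rw [e ht, e' ht]; ring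
  rw [← eLpNorm_congr_ae hu, ← eLpNorm_congr_ae hw] at key
  simpa only [Real.coe_toNNReal _ hΛ₀] using Lp.norm_le_mul_norm_of_eLpNorm_le key

theorem SelfRef.dist_le [Fact (1 ≤ p)] (hN : 0 < N) (hx : StrictMono x)
    (hΛ : ∀ n, ‖α n‖ ≤ Λ) (hΛ₁ : Λ < 1)
    (H : SelfRef (volume.restrict (Icc (x 0) (x (Fin.last N)))) x (fun n => α n) f b h)
    (H' : SelfRef (volume.restrict (Icc (x 0) (x (Fin.last N)))) x (fun n => α n) f' b' h') :
    dist h h' ≤ 1 / (1 - Λ) * (dist f f' + Λ * dist b b') := by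
  have hΛ₀ : 0 ≤ Λ := (norm_nonneg _).trans (hΛ ⟨0, hN⟩)
  have hsplit : ‖(h - b) - (h' - b')‖ ≤ ‖h - h'‖ + ‖b - b'‖ := by
    rw [sub_sub_sub_comm]; exact norm_sub_le _ _
  have key : ‖h - h'‖ ≤ ‖f - f'‖ + Λ * (‖h - h'‖ + ‖b - b'‖) :=
    calc ‖h - h'‖ ≤ ‖f - f'‖ + ‖(h - h') - (f - f')‖ := norm_le_insert' _ _
      _ ≤ ‖f - f'‖ + Λ * ‖(h - b) - (h' - b')‖ := by
          gcongr; exact H.norm_sub_sub_le hN hx hΛ H'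
      _ ≤ ‖f - f'‖ + Λ * (‖h - h'‖ + ‖b - b'‖) := by gcongr
  rw [dist_eq_norm, dist_eq_norm, dist_eq_norm, one_div_mul_eq_div, le_div_iff₀ (by linarith)]
  linarith

theorem SelfRef.dist_left_le [Fact (1 ≤ p)] (hN : 0 < N) (hx : StrictMono x)
    (hΛ : ∀ n, ‖α n‖ ≤ Λ) (hΛ₁ : Λ < 1)
    (H : SelfRef (volume.restrict (Icc (x 0) (x (Fin.last N)))) x (fun n => α n) f b h) :
    dist f h ≤ Λ / (1 - Λ) * (‖f‖ + ‖b‖) := by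
  have hΛ₀ : 0 ≤ Λ := (norm_nonneg _).trans (hΛ ⟨0, hN⟩)
  have key := (SelfRef.self _ x _ f).dist_le hN hx hΛ hΛ₁ H
  rw [dist_self, zero_add, ← mul_assoc, one_div_mul_eq_div] at key
  exact key.trans (mul_le_mul_of_nonneg_left (dist_le_norm_add_norm f b)
    (div_nonneg hΛ₀ (sub_nonneg.2 hΛ₁.le)))

theorem SelfRef.dist_right_le [Fact (1 ≤ p)] (hN : 0 < N) (hx : StrictMono x)
    (hΛ : ∀ n, ‖α n‖ ≤ Λ) (hΛ₁ : Λ < 1)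
    (H : SelfRef (volume.restrict (Icc (x 0) (x (Fin.last N)))) x (fun n => α n) f b h) :
    dist b h ≤ 1 / (1 - Λ) * (‖b‖ + ‖f‖) := by
  have key := (SelfRef.self _ x _ b).dist_le hN hx hΛ hΛ₁ H
  rw [dist_self, mul_zero, add_zero] at key
  exact key.trans (mul_le_mul_of_nonneg_left (dist_le_norm_add_norm b f)
    (one_div_nonneg.2 (sub_nonneg.2 hΛ₁.le)))

end SelfRef

namespace Metric

variable {α β γ : Type*}

theorem hausdorffDist_image2_left_le [PseudoMetricSpace α] {s : Set α} {t : Set β}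
    {φ : α → β → α} {r : ℝ}
    (hs : s.Nonempty) (ht : t.Nonempty) (h : ∀ a ∈ s, ∀ b ∈ t, dist a (φ a b) ≤ r) :
    hausdorffDist s (image2 φ s t) ≤ r := by
  obtain ⟨a₀, ha₀⟩ := hs
  obtain ⟨b₀, hb₀⟩ := ht
  refine hausdorffDist_le_of_mem_dist (dist_nonneg.trans (h a₀ ha₀ b₀ hb₀))
    (fun a ha => ⟨φ a b₀, mem_image2_of_mem ha hb₀, h a ha b₀ hb₀⟩) ?_
  rintro _ ⟨a, ha, b, hb, rfl⟩
  exact ⟨a, ha, dist_comm a (φ a b) ▸ h a ha b hb⟩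

theorem hausdorffDist_image2_right_le [PseudoMetricSpace β] {s : Set α} {t : Set β}
    {φ : α → β → β} {r : ℝ}
    (hs : s.Nonempty) (ht : t.Nonempty) (h : ∀ a ∈ s, ∀ b ∈ t, dist b (φ a b) ≤ r) :
    hausdorffDist t (image2 φ s t) ≤ r := by
  rw [image2_swap]
  exact hausdorffDist_image2_left_le ht hs fun b hb a ha => h a ha b hb

theorem exists_dist_le_hausdorffDist [PseudoMetricSpace α] {s t : Set α} (hs : IsCompact s)
    (ht : IsCompact t) (htne : t.Nonempty) {a : α} (ha : a ∈ s) :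
    ∃ b ∈ t, dist a b ≤ hausdorffDist s t := by
  obtain ⟨b, hb, hab⟩ := ht.exists_infDist_eq_dist htne a
  exact ⟨b, hb, hab ▸ infDist_le_hausdorffDist_of_mem ha
    (hausdorffEDist_ne_top_of_nonempty_of_bounded ⟨a, ha⟩ htne hs.isBounded ht.isBounded)⟩

theorem exists_dist_image2_le [PseudoMetricSpace α] [PseudoMetricSpace β] [PseudoMetricSpace γ]
    {φ : α → β → γ} {K L : ℝ} (hK : 0 ≤ K) (hL : 0 ≤ L)
    (hφ : ∀ a a' b b', dist (φ a b) (φ a' b') ≤ K * (dist a a' + L * dist b b'))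
    {s s' : Set α} {t t' : Set β} (hs : IsCompact s) (hs' : IsCompact s') (ht : IsCompact t)
    (ht' : IsCompact t') (hs'ne : s'.Nonempty) (ht'ne : t'.Nonempty) :
    ∀ c ∈ image2 φ s t, ∃ c' ∈ image2 φ s' t',
      dist c c' ≤ K * (hausdorffDist s s' + L * hausdorffDist t t') := by
  rintro _ ⟨a, ha, b, hb, rfl⟩
  obtain ⟨a', ha', haa'⟩ := exists_dist_le_hausdorffDist hs hs' hs'ne ha
  obtain ⟨b', hb', hbb'⟩ := exists_dist_le_hausdorffDist ht ht' ht'ne hb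
  exact ⟨φ a' b', mem_image2_of_mem ha' hb', (hφ a a' b b').trans (by gcongr)⟩

theorem hausdorffDist_image2_le [PseudoMetricSpace α] [PseudoMetricSpace β] [PseudoMetricSpace γ]
    {φ : α → β → γ} {K L : ℝ} (hK : 0 ≤ K) (hL : 0 ≤ L)
    (hφ : ∀ a a' b b', dist (φ a b) (φ a' b') ≤ K * (dist a a' + L * dist b b'))
    {s s' : Set α} {t t' : Set β} (hs : IsCompact s) (hs' : IsCompact s') (ht : IsCompact t)
    (ht' : IsCompact t') (hsne : s.Nonempty) (hs'ne : s'.Nonempty) (htne : t.Nonempty)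
    (ht'ne : t'.Nonempty) :
    hausdorffDist (image2 φ s t) (image2 φ s' t') ≤
      K * (hausdorffDist s s' + L * hausdorffDist t t') := by
  refine hausdorffDist_le_of_mem_dist
    (mul_nonneg hK (add_nonneg hausdorffDist_nonneg (mul_nonneg hL hausdorffDist_nonneg)))
    (exists_dist_image2_le hK hL hφ hs hs' ht ht' hs'ne ht'ne) fun c hc => ?_
  obtain ⟨c', hc', hcc'⟩ := exists_dist_image2_le hK hL hφ hs' hs ht' ht hsne htne c hc
  exact ⟨c', hc', by rwa [hausdorffDist_comm, hausdorffDist_comm (s := t)]⟩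

theorem hausdorffDist_le_add_of_norm_le {E : Type*} [SeminormedAddCommGroup E] {s t : Set E}
    {M M' : ℝ} (hs : s.Nonempty) (ht : t.Nonempty) (hM : ∀ a ∈ s, ‖a‖ ≤ M)
    (hM' : ∀ b ∈ t, ‖b‖ ≤ M') : hausdorffDist s t ≤ M + M' := by
  have hd : ∀ a ∈ s, ∀ b ∈ t, dist a b ≤ M + M' := fun a ha b hb =>
    (dist_le_norm_add_norm a b).trans (add_le_add (hM a ha) (hM' b hb))
  obtain ⟨a₀, ha₀⟩ := hs
  obtain ⟨b₀, hb₀⟩ := ht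
  exact hausdorffDist_le_of_mem_dist (dist_nonneg.trans (hd a₀ ha₀ b₀ hb₀))
    (fun a ha => ⟨b₀, hb₀, hd a ha b₀ hb₀⟩)
    (fun b hb => ⟨a₀, ha₀, dist_comm b a₀ ▸ hd a₀ ha₀ b hb⟩)

end Metric

/-- Hausdorff-distance estimates for the convolution sets
`F *_T b`, `f *_T B` and `F *_T B` built from nonempty compact bounded subsets
`F, F', B, B' ⊆ L^p(I)`. -/
theorem hausdorffDist_convolution_sets
    (N : ℕ) (hN : 2 ≤ N) (x : Fin (N + 1) → ℝ) (hx : StrictMono x)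
    (μ : Measure ℝ) (hμ : μ = volume.restrict (Set.Icc (x 0) (x (Fin.last N))))
    (p : ℝ≥0∞) [Fact (1 ≤ p)]
    (α : Fin N → Lp ℝ ∞ μ)
    (Λ : ℝ) (hΛdef : Λ = ⨆ n : Fin N, ‖α n‖) (hΛ : Λ < 1)
    (P : Lp ℝ p μ → Lp ℝ p μ → Lp ℝ p μ)
    (hP : ∀ f b : Lp ℝ p μ, SelfRef μ x (fun n => ⇑(α n)) ⇑f ⇑b ⇑(P f b))
    (F F' B B' : Set (Lp ℝ p μ))
    (hFc : IsCompact F) (hF'c : IsCompact F') (hBc : IsCompact B) (hB'c : IsCompact B')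
    (hFne : F.Nonempty) (hF'ne : F'.Nonempty) (hBne : B.Nonempty) (hB'ne : B'.Nonempty)
    (MF MF' MB MB' : ℝ)
    (hMF : ∀ f ∈ F, ‖f‖ ≤ MF) (hMF' : ∀ f ∈ F', ‖f‖ ≤ MF')
    (hMB : ∀ g ∈ B, ‖g‖ ≤ MB) (hMB' : ∀ g ∈ B', ‖g‖ ≤ MB')
    (f b : Lp ℝ p μ) :
    Metric.hausdorffDist F ((fun g => P g b) '' F) ≤ Λ / (1 - Λ) * (MF + ‖b‖) ∧
    Metric.hausdorffDist B (P f '' B) ≤ 1 / (1 - Λ) * (MB + ‖f‖) ∧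
    Metric.hausdorffDist F (Set.image2 P F B) ≤ Λ / (1 - Λ) * (MF + MB) ∧
    Metric.hausdorffDist B (Set.image2 P F B) ≤ 1 / (1 - Λ) * (MB + MF) ∧
    Metric.hausdorffDist (Set.image2 P F B) (Set.image2 P F' B)
      ≤ 1 / (1 - Λ) * (MF + MF') ∧
    Metric.hausdorffDist (Set.image2 P F B) (Set.image2 P F B')
      ≤ Λ / (1 - Λ) * (MB + MB') ∧
    Metric.hausdorffDist (Set.image2 P F B) (Set.image2 P F' B')
      ≤ 1 / (1 - Λ) * ((MF + MF') + Λ * (MB + MB')) := by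
  subst hμ
  have hN₀ : 0 < N := by omega
  have hΛα : ∀ n, ‖α n‖ ≤ Λ := fun n =>
    hΛdef ▸ le_ciSup (finite_range fun n => ‖α n‖).bddAbove n
  have hΛ₀ : 0 ≤ Λ := (norm_nonneg _).trans (hΛα ⟨0, hN₀⟩)
  have hK : 0 ≤ 1 / (1 - Λ) := one_div_nonneg.2 (sub_nonneg.2 hΛ.le)
  have hLip f f' b b' : dist (P f b) (P f' b') ≤ 1 / (1 - Λ) * (dist f f' + Λ * dist b b') :=
    (hP f b).dist_le hN₀ hx hΛα hΛ (hP f' b')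
  have hleft {g c M M'} (hg : ‖g‖ ≤ M) (hc : ‖c‖ ≤ M') :
      dist g (P g c) ≤ Λ / (1 - Λ) * (M + M') :=
    ((hP g c).dist_left_le hN₀ hx hΛα hΛ).trans (by gcongr)
  have hright {g c M M'} (hg : ‖g‖ ≤ M) (hc : ‖c‖ ≤ M') :
      dist c (P g c) ≤ 1 / (1 - Λ) * (M' + M) :=
    ((hP g c).dist_right_le hN₀ hx hΛα hΛ).trans (by gcongr)
  have hFF' := hausdorffDist_le_add_of_norm_le hFne hF'ne hMF hMF'
  have hBB' := hausdorffDist_le_add_of_norm_le hBne hB'ne hMB hMB'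
  refine ⟨?_, ?_, ?_, ?_, ?_, ?_, ?_⟩
  · rw [← image2_singleton_right]
    exact hausdorffDist_image2_left_le hFne (singleton_nonempty b) fun g hg c hc =>
      hleft (hMF g hg) (congrArg norm hc).le
  · rw [← image2_singleton_left]
    exact hausdorffDist_image2_right_le (singleton_nonempty f) hBne fun g hg c hc =>
      hright (congrArg norm hg).le (hMB c hc)
  · exact hausdorffDist_image2_left_le hFne hBne fun g hg c hc => hleft (hMF g hg) (hMB c hc)
  · exact hausdorffDist_image2_right_le hFne hBne fun g hg c hc => hright (hMF g hg) (hMB c hc)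
  · refine (hausdorffDist_image2_le hK hΛ₀ hLip hFc hF'c hBc hBc hFne hF'ne hBne hBne).trans ?_
    rw [hausdorffDist_self_zero, mul_zero, add_zero]
    gcongr
  · refine (hausdorffDist_image2_le hK hΛ₀ hLip hFc hFc hBc hB'c hFne hFne hBne hB'ne).trans ?_
    rw [hausdorffDist_self_zero, zero_add, ← mul_assoc, one_div_mul_eq_div]
    gcongr
  · exact (hausdorffDist_image2_le hK hΛ₀ hLip hFc hF'c hBc hB'c hFne hF'ne hBne hB'ne).trans
      (by gcongr)

end
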